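/- arXiv:1312.7342 — 3 statements merged into one kernel-verified Lean document; each statement's English description precedes it below -/
import Mathlib

section
/- For every T > 0 and z > 0, the integral from 0 to T of t · z/(√(2π) t^{3/2}) · exp(−z²/(2t)) dt equals (2z/√(2π)) · (√T · exp(−z²/(2T)) − √(2π) · z · (1 − Φ(z/√T))), where Φ is the standard normal CDF; in particular the integral tends to infinity as T → ∞. -/
open Real MeasureTheory Filter

/-- The cumulative distribution function of a standard normal random variable. -/
noncomputable def stdNormalCDF (x : ℝ) : ℝ :=
  ∫ u in Set.Iic x, (1 / Real.sqrt (2 * π)) * Real.exp (-u ^ 2 / 2)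

open Set ProbabilityTheory
open scoped Topology

/-! The integrand simplifies to `z e^{-z²/2t} / √(2π t)`, and the closed form is an
antiderivative of it on `(0, ∞)`: differentiating the `Φ` term (with `Φ' = φ`) cancels the
`z² e^{-z²/2t} / t^{3/2}` part of the derivative of `√t e^{-z²/2t}`. As `t → 0⁺` the closed form
tends to `0`, because `Φ(z/√t) → 1` and `√t e^{-z²/2t} → 0`, so the fundamental theorem of
calculus with a one-sided limit at `0` gives the formula. As `T → ∞` the term `√T e^{-z²/2T}`
grows like `√T` while `Φ(z/√T) → Φ(0)`, so the integral diverges. -/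

section IntegralIic

variable {f : ℝ → ℝ}

lemma hasDerivAt_integral_Iic (hf : Integrable f) (hfc : Continuous f) (x : ℝ) :
    HasDerivAt (fun y ↦ ∫ u in Iic y, f u) (f x) x := by
  have hsplit : (fun y ↦ ∫ u in Iic y, f u) =
      fun y ↦ (∫ u in Iic 0, f u) + ∫ u in (0 : ℝ)..y, f u := by
    funext y
    rw [← intervalIntegral.integral_Iic_sub_Iic hf.integrableOn hf.integrableOn]
    ring
  rw [hsplit]
  exact (intervalIntegral.integral_hasDerivAt_right hf.intervalIntegrable
    (hfc.stronglyMeasurableAtFilter _ _) hfc.continuousAt).const_add _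

lemma tendsto_integral_Iic_atTop (hf : Integrable f) :
    Tendsto (fun y ↦ ∫ u in Iic y, f u) atTop (𝓝 (∫ u, f u)) :=
  (aecover_Iic tendsto_id).integral_tendsto_of_countably_generated hf

end IntegralIic

lemma stdNormalDensity_eq_gaussianPDFReal :
    (fun u : ℝ ↦ (1 / √(2 * π)) * exp (-u ^ 2 / 2)) = gaussianPDFReal 0 1 := by
  funext u
  simp [gaussianPDFReal]

lemma hasDerivAt_stdNormalCDF (x : ℝ) :
    HasDerivAt stdNormalCDF ((1 / √(2 * π)) * exp (-x ^ 2 / 2)) x :=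
  hasDerivAt_integral_Iic (f := fun u ↦ (1 / √(2 * π)) * exp (-u ^ 2 / 2))
    (stdNormalDensity_eq_gaussianPDFReal ▸ integrable_gaussianPDFReal 0 1) (by fun_prop) x

lemma continuous_stdNormalCDF : Continuous stdNormalCDF :=
  continuous_iff_continuousAt.2 fun x ↦ (hasDerivAt_stdNormalCDF x).continuousAt

lemma tendsto_stdNormalCDF_atTop : Tendsto stdNormalCDF atTop (𝓝 1) := by
  have h := tendsto_integral_Iic_atTop (integrable_gaussianPDFReal 0 1)
  rw [integral_gaussianPDFReal_eq_one 0 one_ne_zero, ← stdNormalDensity_eq_gaussianPDFReal] at h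
  exact h

lemma mul_div_mul_rpow_three_halves (a b : ℝ) {t : ℝ} (ht : 0 ≤ t) :
    t * (a / (b * t ^ ((3 : ℝ) / 2))) = a / b / √t := by
  rcases ht.eq_or_lt with rfl | ht
  · simp
  have h32 : t ^ ((3 : ℝ) / 2) = t * √t := by
    rw [show (3 : ℝ) / 2 = 1 + 1 / 2 by norm_num, rpow_add ht, rpow_one, ← sqrt_eq_rpow]
  have hs : √t ≠ 0 := (sqrt_pos.2 ht).ne'
  rw [h32]
  field_simp

lemma tendsto_exp_neg_sq_div_nhdsGT_zero {z : ℝ} (hz : z ≠ 0) :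
    Tendsto (fun t ↦ exp (-z ^ 2 / (2 * t))) (𝓝[>] 0) (𝓝 0) := by
  have h := (tendsto_inv_nhdsGT_zero.const_mul_atTop (by positivity : 0 < z ^ 2 / 2))
  refine (tendsto_exp_atBot.comp (tendsto_neg_atTop_atBot.comp h)).congr fun t ↦ ?_
  simp only [Function.comp_apply]
  ring_nf

lemma tendsto_div_sqrt_mul_exp_nhdsGT_zero (c : ℝ) {z : ℝ} (hz : z ≠ 0) :
    Tendsto (fun t ↦ c / √t * exp (-z ^ 2 / (2 * t))) (𝓝[>] 0) (𝓝 0) := by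
  have h := ((tendsto_rpow_mul_exp_neg_mul_atTop_nhds_zero (1 / 2) (z ^ 2 / 2)
    (by positivity)).comp tendsto_inv_nhdsGT_zero).const_mul c
  rw [mul_zero] at h
  refine h.congr fun t ↦ ?_
  simp only [Function.comp_apply]
  rw [← sqrt_eq_rpow, sqrt_inv]
  ring_nf

lemma continuousOn_div_sqrt_mul_exp (c : ℝ) {z : ℝ} (hz : z ≠ 0) :
    ContinuousOn (fun t ↦ c / √t * exp (-z ^ 2 / (2 * t))) (Ici 0) := by
  intro t ht
  rcases (mem_Ici.1 ht).eq_or_lt with rfl | ht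
  · refine continuousWithinAt_Ioi_iff_Ici.1 ?_
    simpa [ContinuousWithinAt] using tendsto_div_sqrt_mul_exp_nhdsGT_zero c hz
  · have hs : √t ≠ 0 := (sqrt_pos.2 ht).ne'
    exact (ContinuousAt.mul (continuousAt_const.div continuous_sqrt.continuousAt hs)
      (by fun_prop (disch := positivity))).continuousWithinAt

/-- The closed form of `∫₀ᵀ t ρ(t) dt` for the Lévy density
`ρ(t) = z t^{-3/2} e^{-z²/2t} / √(2π)`. At `T = 0` it is `-z ^ 2`, not its right limit `0`. -/
noncomputable def levyTruncatedMean (z T : ℝ) : ℝ :=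
  (2 * z / √(2 * π)) * (√T * exp (-z ^ 2 / (2 * T)) - √(2 * π) * z * (1 - stdNormalCDF (z / √T)))

lemma hasDerivAt_levyTruncatedMean (z : ℝ) {t : ℝ} (ht : 0 < t) :
    HasDerivAt (levyTruncatedMean z) (z / √(2 * π) / √t * exp (-z ^ 2 / (2 * t))) t := by
  have hs : √t ≠ 0 := (sqrt_pos.2 ht).ne'
  have hsqrt : HasDerivAt (fun u ↦ √u) (1 / (2 * √t)) t := hasDerivAt_sqrt ht.ne'
  have hexp : HasDerivAt (fun u ↦ exp (-z ^ 2 / (2 * u)))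
      (exp (-z ^ 2 / (2 * t)) * (z ^ 2 / (2 * t ^ 2))) t := by
    have h := ((hasDerivAt_inv ht.ne').const_mul (-z ^ 2 / 2)).exp
    convert h using 1
    · funext u; ring_nf
    · ring_nf
  have hcdf := (hasDerivAt_stdNormalCDF _).comp t ((hasDerivAt_const t z).fun_div hsqrt hs)
  have hsq : √t ^ 2 = t := sq_sqrt ht.le
  refine (((hsqrt.mul hexp).sub ((hcdf.const_sub 1).const_mul (√(2 * π) * z))).const_mul
    (2 * z / √(2 * π))).congr_deriv ?_
  have hexp_eq : exp (-(z / √t) ^ 2 / 2) = exp (-z ^ 2 / (2 * t)) := by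
    rw [div_pow, hsq]; ring_nf
  rw [hexp_eq]
  field_simp
  rw [hsq]
  ring

lemma tendsto_levyTruncatedMean_nhdsGT_zero {z : ℝ} (hz : 0 < z) :
    Tendsto (levyTruncatedMean z) (𝓝[>] 0) (𝓝 0) := by
  have hsqrt : Tendsto (fun t ↦ √t) (𝓝[>] 0) (𝓝 0) := by
    simpa using continuous_sqrt.continuousWithinAt.tendsto (s := Ioi 0) (x := 0)
  have hinv : Tendsto (fun t ↦ z / √t) (𝓝[>] 0) atTop := by
    have hpos : Tendsto (fun t ↦ √t) (𝓝[>] 0) (𝓝[>] 0) :=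
      tendsto_nhdsWithin_iff.2 ⟨hsqrt, eventually_mem_nhdsWithin.mono fun t ht ↦ sqrt_pos.2 ht⟩
    simpa only [div_eq_mul_inv, Pi.inv_apply] using hpos.inv_tendsto_nhdsGT_zero.const_mul_atTop hz
  have hcdf := tendsto_stdNormalCDF_atTop.comp hinv
  have h := ((hsqrt.mul (tendsto_exp_neg_sq_div_nhdsGT_zero hz.ne')).sub
    (((tendsto_const_nhds (x := (1 : ℝ))).sub hcdf).const_mul (√(2 * π) * z))).const_mul
      (2 * z / √(2 * π))
  simp only [mul_zero, sub_self] at h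
  exact h

lemma tendsto_levyTruncatedMean_atTop {z : ℝ} (hz : 0 < z) :
    Tendsto (levyTruncatedMean z) atTop atTop := by
  have hexp : Tendsto (fun T ↦ exp (-z ^ 2 / (2 * T))) atTop (𝓝 1) := by
    have h : Tendsto (fun T : ℝ ↦ -z ^ 2 / (2 * T)) atTop (𝓝 0) :=
      tendsto_const_nhds.div_atTop (tendsto_id.const_mul_atTop two_pos)
    exact tendsto_exp_nhds_zero_nhds_one.comp h
  have hcdf : Tendsto (fun T ↦ stdNormalCDF (z / √T)) atTop (𝓝 (stdNormalCDF 0)) :=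
    (continuous_stdNormalCDF.tendsto 0).comp (tendsto_const_nhds.div_atTop tendsto_sqrt_atTop)
  have hgrowth : Tendsto (fun T ↦ √T * exp (-z ^ 2 / (2 * T))) atTop atTop :=
    tendsto_sqrt_atTop.atTop_mul_pos one_pos hexp
  have hbounded := ((tendsto_const_nhds (x := (1 : ℝ))).sub hcdf).const_mul (√(2 * π) * z)
  refine ((hgrowth.atTop_add hbounded.neg).const_mul_atTop
    (by positivity : 0 < 2 * z / √(2 * π))).congr fun T ↦ ?_
  simp only [levyTruncatedMean]
  ring

lemma integral_div_sqrt_mul_exp_eq_levyTruncatedMean {z : ℝ} (hz : 0 < z) {T : ℝ} (hT : 0 < T) :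
    ∫ t in (0 : ℝ)..T, z / √(2 * π) / √t * exp (-z ^ 2 / (2 * t)) = levyTruncatedMean z T := by
  have hint :
      IntervalIntegrable (fun t ↦ z / √(2 * π) / √t * exp (-z ^ 2 / (2 * t))) volume 0 T :=
    ((continuousOn_div_sqrt_mul_exp _ hz.ne').mono
      (by simp [uIcc_of_le hT.le, Icc_subset_Ici_self])).intervalIntegrable
  rw [intervalIntegral.integral_eq_sub_of_hasDerivAt_of_tendsto hT
    (fun t ht ↦ hasDerivAt_levyTruncatedMean z ht.1) hint (tendsto_levyTruncatedMean_nhdsGT_zero hz)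
    (hasDerivAt_levyTruncatedMean z hT).continuousAt.continuousWithinAt.tendsto, sub_zero]

/-- For every `T > 0` and `z > 0`,
`∫_0^T t · z/(√(2π) t^{3/2}) · exp(−z²/(2t)) dt
  = (2z/√(2π)) (√T exp(−z²/(2T)) − √(2π) z (1 − Φ(z/√T)))`,
and the integral tends to infinity as `T → ∞`. -/
theorem truncated_last_passage_mean (z : ℝ) (hz : 0 < z) :
    (∀ T : ℝ, 0 < T →
      (∫ t in (0 : ℝ)..T,
          t * (z / (Real.sqrt (2 * π) * t ^ ((3 : ℝ) / 2)) * Real.exp (-z ^ 2 / (2 * t)))) =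
        (2 * z / Real.sqrt (2 * π)) *
          (Real.sqrt T * Real.exp (-z ^ 2 / (2 * T)) -
            Real.sqrt (2 * π) * z * (1 - stdNormalCDF (z / Real.sqrt T)))) ∧
    Tendsto (fun T : ℝ =>
        ∫ t in (0 : ℝ)..T,
          t * (z / (Real.sqrt (2 * π) * t ^ ((3 : ℝ) / 2)) * Real.exp (-z ^ 2 / (2 * t))))
      atTop atTop := by
  have hmean : ∀ T : ℝ, 0 < T →
      (∫ t in (0 : ℝ)..T,
        t * (z / (√(2 * π) * t ^ ((3 : ℝ) / 2)) * exp (-z ^ 2 / (2 * t)))) =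
        levyTruncatedMean z T := by
    intro T hT
    rw [← integral_div_sqrt_mul_exp_eq_levyTruncatedMean hz hT]
    refine intervalIntegral.integral_congr fun t ht ↦ ?_
    rw [uIcc_of_le hT.le] at ht
    simp only [← mul_assoc, mul_div_mul_rpow_three_halves _ _ ht.1]
  refine ⟨hmean, (tendsto_levyTruncatedMean_atTop hz).congr' ?_⟩
  filter_upwards [eventually_gt_atTop 0] with T hT using (hmean T hT).symm
end

section
/- Define V(x) = −s(x)∫_0^x c(y) m(dy) − ∫_x^{r_*} s(y) c(y) m(dy) for 0 < x ≤ r_* and V(x) = 0 for x ≥ r_*, where ∫_0^{r_*} c dm = 0. Then V(x) ≤ 0 for all x > 0. -/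
open Real MeasureTheory Filter Set Topology

/-!
Write `I(x) = ∫_0^x c dm` and let `w` be the point with `s w = s z / 2`, so that `c` has the sign
of `s - s w`. Since `I(r_*) = 0`, for every constant `a`
`V(x) = -(s x - a) I(x) + ∫_x^{r_*} (a - s y) c(y) m(dy)`.
For `x ≥ w` take `a = s x`: the integrand `(s x - s y) c(y)` is `≤ 0` because `s` increases and
`c ≥ 0` beyond `w`. For `x ≤ w` take `a = s w`: the integrand `(s w - s y) c(y)` is `≤ 0`
everywhere, and `-(s x - s w) I(x) ≤ 0` because both factors are `≤ 0`.
-/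

section SignOfCost

variable {b t : ℝ}

lemma one_sub_two_mul_min_div_nonpos (hb : b < 0) (ht : t ≤ b / 2) :
    1 - 2 * min (t / b) 1 ≤ 0 := by
  have : 1 / 2 ≤ t / b := by rw [le_div_iff_of_neg hb]; linarith
  have : 1 / 2 ≤ min (t / b) 1 := le_min this (by norm_num)
  linarith

lemma one_sub_two_mul_min_div_nonneg (hb : b < 0) (ht : b / 2 ≤ t) :
    0 ≤ 1 - 2 * min (t / b) 1 := by
  have : t / b ≤ 1 / 2 := by rw [div_le_iff_of_neg hb]; linarith
  have : min (t / b) 1 ≤ 1 / 2 := (min_le_left _ _).trans this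
  linarith

lemma sub_mul_one_sub_two_mul_min_div_nonpos (hb : b < 0) :
    (b / 2 - t) * (1 - 2 * min (t / b) 1) ≤ 0 := by
  rcases le_total t (b / 2) with ht | ht
  · exact mul_nonpos_of_nonneg_of_nonpos (by linarith)
      (one_sub_two_mul_min_div_nonpos hb ht)
  · exact mul_nonpos_of_nonpos_of_nonneg (by linarith)
      (one_sub_two_mul_min_div_nonneg hb ht)

end SignOfCost

lemma neg_mul_setIntegral_Ioc_sub_setIntegral_Ioc_eq {μ : Measure ℝ} {s c : ℝ → ℝ}
    {l x r : ℝ} (hlx : l ≤ x) (hxr : x ≤ r)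
    (hc : IntegrableOn c (Ioc l r) μ) (hsc : IntegrableOn (fun y ↦ s y * c y) (Ioc l r) μ)
    (hroot : ∫ y in Ioc l r, c y ∂μ = 0) (a b : ℝ) :
    -b * (∫ y in Ioc l x, c y ∂μ) - ∫ y in Ioc x r, s y * c y ∂μ =
      -(b - a) * (∫ y in Ioc l x, c y ∂μ) + ∫ y in Ioc x r, (a - s y) * c y ∂μ := by
  have hc_right : IntegrableOn c (Ioc x r) μ := hc.mono_set (Ioc_subset_Ioc hlx le_rfl)
  have hsplit : (∫ y in Ioc l x, c y ∂μ) + ∫ y in Ioc x r, c y ∂μ = 0 := by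
    rw [← setIntegral_union (Ioc_disjoint_Ioc_of_le le_rfl) measurableSet_Ioc
      (hc.mono_set (Ioc_subset_Ioc le_rfl hxr)) hc_right, Ioc_union_Ioc_eq_Ioc hlx hxr, hroot]
  simp only [sub_mul]
  rw [integral_sub (hc_right.const_mul a) (hsc.mono_set (Ioc_subset_Ioc hlx le_rfl)),
    integral_const_mul]
  linear_combination -a * hsplit

theorem value_function_nonpositive_general (s : ℝ → ℝ) (m : Measure ℝ) (z rstar : ℝ)
    (hz : 0 < z)
    (hmono : StrictMonoOn s (Set.Ioi 0))
    (hneg : ∀ x : ℝ, 0 < x → s x < 0)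
    (c : ℝ → ℝ) (hc : ∀ x : ℝ, c x = 1 - 2 * min (s x / s z) 1)
    (w : ℝ) (hw : 0 < w) (hsw : s w = s z / 2)
    (hint1 : IntegrableOn c (Set.Ioc 0 rstar) m)
    (hint2 : IntegrableOn (fun y => s y * c y) (Set.Ioc 0 rstar) m)
    (hroot : (∫ y in Set.Ioc (0 : ℝ) rstar, c y ∂m) = 0)
    (V : ℝ → ℝ)
    (hV1 : ∀ x : ℝ, 0 < x → x ≤ rstar →
      V x = -(s x) * (∫ y in Set.Ioc (0 : ℝ) x, c y ∂m) -
        ∫ y in Set.Ioc x rstar, s y * c y ∂m)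
    (hV2 : ∀ x : ℝ, rstar ≤ x → V x = 0) :
    ∀ x : ℝ, 0 < x → V x ≤ 0 := by
  intro x hx
  have hsz : s z < 0 := hneg z hz
  have hs_le {y y' : ℝ} (hy : 0 < y) (hyy' : y ≤ y') : s y ≤ s y' :=
    hmono.monotoneOn hy (hy.trans_le hyy') hyy'
  obtain hrx | hxr := le_or_gt rstar x
  · exact (hV2 x hrx).le
  have hvalue := neg_mul_setIntegral_Ioc_sub_setIntegral_Ioc_eq hx.le hxr.le hint1 hint2 hroot
  rw [hV1 x hx hxr.le]
  rcases le_total w x with hwx | hxw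
  · rw [hvalue (s x), sub_self, neg_zero, zero_mul, zero_add]
    refine setIntegral_nonpos measurableSet_Ioc fun y hy ↦ mul_nonpos_of_nonpos_of_nonneg
      (sub_nonpos.2 (hs_le hx hy.1.le)) ?_
    rw [hc]
    exact one_sub_two_mul_min_div_nonneg hsz (hsw ▸ hs_le hw (hwx.trans hy.1.le))
  · rw [hvalue (s w)]
    have hI : ∫ y in Ioc 0 x, c y ∂m ≤ 0 := setIntegral_nonpos measurableSet_Ioc fun y hy ↦ by
      rw [hc]
      exact one_sub_two_mul_min_div_nonpos hsz (hsw ▸ hs_le hy.1 (hy.2.trans hxw))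
    refine add_nonpos ?_ (setIntegral_nonpos measurableSet_Ioc fun y _ ↦ ?_)
    · nlinarith [hs_le hx hxw]
    · rw [hc, hsw]
      exact sub_mul_one_sub_two_mul_min_div_nonpos hsz

/-- The candidate value function
`V(x) = −s(x) ∫_0^x c dm − ∫_x^{r_*} s c dm` for `0 < x ≤ r_*`, `V = 0` for `x ≥ r_*`,
where `∫_0^{r_*} c dm = 0`, satisfies `V(x) ≤ 0` for all `x > 0`. -/
theorem value_function_nonpositive (s : ℝ → ℝ) (m : Measure ℝ) (z rstar : ℝ)
    (hz : 0 < z)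
    (hcont : ContinuousOn s (Set.Ioi 0)) (hmono : StrictMonoOn s (Set.Ioi 0))
    (hneg : ∀ x : ℝ, 0 < x → s x < 0)
    (hstop : Tendsto s atTop (nhds 0))
    (c : ℝ → ℝ) (hc : ∀ x : ℝ, c x = 1 - 2 * min (s x / s z) 1)
    (w : ℝ) (hw : 0 < w) (hsw : s w = s z / 2) (hwr : w < rstar)
    (hint1 : IntegrableOn c (Set.Ioc 0 rstar) m)
    (hint2 : IntegrableOn (fun y => s y * c y) (Set.Ioc 0 rstar) m)
    (hroot : (∫ y in Set.Ioc (0 : ℝ) rstar, c y ∂m) = 0)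
    (V : ℝ → ℝ)
    (hV1 : ∀ x : ℝ, 0 < x → x ≤ rstar →
      V x = -(s x) * (∫ y in Set.Ioc (0 : ℝ) x, c y ∂m) -
        ∫ y in Set.Ioc x rstar, s y * c y ∂m)
    (hV2 : ∀ x : ℝ, rstar ≤ x → V x = 0) :
    ∀ x : ℝ, 0 < x → V x ≤ 0 :=
  value_function_nonpositive_general s m z rstar hz hmono hneg c hc w hw hsw hint1 hint2 hroot V hV1
    hV2
end

section
/- For the diffusion with scale function s(x) = 1 − exp(−(2λ/(κ(1−p))) x^{1−p}) and speed measure m(dx) = (1/(λκ)) x^{−p} exp((2λ/(κ(1−p))) x^{1−p}) dx, with λ, κ > 0 and p > 1, one has ∫_1^∞ (s(∞−) − s(y)) m(dy) < 1/(λκ(p−1)) < ∞; hence the boundary at infinity is attainable. -/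
open Real MeasureTheory Filter Set

/-!
With `c = 2λ/(κ(1-p))` one has `s(∞-) = 0`, and the factors `exp(∓c y^{1-p})` of the scale
function and of the speed density cancel, so that
`(s(∞-) - s(y)) m(dy) = (1/(λκ)) y^{-p} (1 - exp(c y^{1-p})) dy`. The integrand is strictly below
`(1/(λκ)) y^{-p}`, whose integral over `(1, ∞)` is `1/(λκ(p-1))`.
-/

theorem tendsto_one_sub_exp_mul_rpow_atTop (a : ℝ) {r : ℝ} (hr : r < 0) :
    Tendsto (fun x : ℝ => 1 - exp (a * x ^ r)) atTop (nhds 0) := by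
  have hpow : Tendsto (fun x : ℝ => x ^ r) atTop (nhds 0) := by
    simpa using tendsto_rpow_neg_atTop (neg_pos.mpr hr)
  simpa using (tendsto_const_nhds (x := (1 : ℝ))).sub (hpow.const_mul a).rexp

theorem setIntegral_pos_of_forall_pos {X : Type*} [MeasurableSpace X] {μ : Measure X}
    {s : Set X} {f : X → ℝ} (hs : MeasurableSet s) (hμs : μ s ≠ 0) (hfi : IntegrableOn f s μ)
    (hf : ∀ x ∈ s, 0 < f x) : 0 < ∫ x in s, f x ∂μ := by
  have hsupport : Function.support f ∩ s = s := inter_eq_right.mpr fun x hx => (hf x hx).ne'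
  rw [setIntegral_pos_iff_support_of_nonneg_ae ?_ hfi, hsupport]
  · exact pos_iff_ne_zero.mpr hμs
  · exact ae_restrict_of_forall_mem hs fun x hx => (hf x hx).le

theorem integral_Ioi_one_rpow_neg {p : ℝ} (hp : 1 < p) :
    ∫ y in Ioi (1 : ℝ), y ^ (-p) = 1 / (p - 1) := by
  rw [integral_Ioi_rpow_of_lt (by linarith) one_pos, one_rpow, neg_div, ← div_neg,
    neg_add_eq_sub, neg_sub]

theorem integrableOn_Ioi_one_rpow_neg_mul_exp (c : ℝ) {p : ℝ} (hp : 1 < p) :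
    IntegrableOn (fun y : ℝ => y ^ (-p) * exp (c * y ^ (1 - p))) (Ioi 1) := by
  refine (integrableOn_Ioi_rpow_of_lt (by linarith) one_pos).mul_bdd (c := exp |c|)
    (by fun_prop) (ae_restrict_of_forall_mem measurableSet_Ioi fun y hy => ?_)
  have hy : (1 : ℝ) < y := hy
  have ht₀ : 0 ≤ y ^ (1 - p) := rpow_nonneg (by linarith) _
  have ht₁ : y ^ (1 - p) ≤ 1 := rpow_le_one_of_one_le_of_nonpos hy.le (by linarith)
  rw [norm_of_nonneg (exp_pos _).le, exp_le_exp]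
  nlinarith [le_abs_self c, abs_nonneg c]

theorem integral_Ioi_one_rpow_neg_mul_one_sub_exp_lt (c : ℝ) {p : ℝ} (hp : 1 < p) :
    ∫ y in Ioi (1 : ℝ), y ^ (-p) * (1 - exp (c * y ^ (1 - p))) < 1 / (p - 1) := by
  have hpow := integrableOn_Ioi_rpow_of_lt (show -p < -1 by linarith) one_pos
  have hdens := integrableOn_Ioi_one_rpow_neg_mul_exp c hp
  have hgap : 0 < ∫ y in Ioi (1 : ℝ), y ^ (-p) * exp (c * y ^ (1 - p)) :=
    setIntegral_pos_of_forall_pos measurableSet_Ioi (by simp) hdens fun y hy =>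
      mul_pos (rpow_pos_of_pos (one_pos.trans hy) _) (exp_pos _)
  have hsplit : ∫ y in Ioi (1 : ℝ), y ^ (-p) * (1 - exp (c * y ^ (1 - p))) =
      (∫ y in Ioi (1 : ℝ), y ^ (-p)) - ∫ y in Ioi (1 : ℝ), y ^ (-p) * exp (c * y ^ (1 - p)) := by
    rw [← integral_sub hpow hdens]
    simp only [mul_sub, mul_one]
  rw [hsplit, integral_Ioi_one_rpow_neg hp]
  linarith

/-- For the explosive diffusion with scale function
`s(x) = 1 − exp(−(2λ/(κ(1−p))) x^{1−p})` and speed density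
`(1/(λκ)) x^{−p} exp((2λ/(κ(1−p))) x^{1−p})`, with `λ, κ > 0` and `p > 1`, one has
`∫_1^∞ (s(∞−) − s(y)) m(dy) < 1/(λκ(p−1)) < ∞`; hence the boundary at infinity is
attainable. -/
theorem explosive_diffusion_feller_test (lam kap p : ℝ)
    (hl : 0 < lam) (hk : 0 < kap) (hp : 1 < p)
    (s dens : ℝ → ℝ)
    (hs : ∀ x : ℝ, s x = 1 - Real.exp (-(2 * lam / (kap * (1 - p))) * x ^ (1 - p)))
    (hdens : ∀ x : ℝ, dens x =
      (1 / (lam * kap)) * x ^ (-p) * Real.exp ((2 * lam / (kap * (1 - p))) * x ^ (1 - p)))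
    (sInfty : ℝ) (hsInfty : Tendsto s atTop (nhds sInfty)) :
    (∫ y in Set.Ioi (1 : ℝ), (sInfty - s y) * dens y) < 1 / (lam * kap * (p - 1)) := by
  set c := 2 * lam / (kap * (1 - p))
  have hs_lim : sInfty = 0 := by
    refine tendsto_nhds_unique hsInfty ?_
    simpa only [← hs] using tendsto_one_sub_exp_mul_rpow_atTop (-c) (by linarith : 1 - p < 0)
  have hintegrand : ∀ y : ℝ, (sInfty - s y) * dens y =
      1 / (lam * kap) * (y ^ (-p) * (1 - exp (c * y ^ (1 - p)))) := by
    intro y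
    have hcancel : exp (-c * y ^ (1 - p)) * exp (c * y ^ (1 - p)) = 1 := by
      rw [← exp_add, neg_mul, neg_add_cancel, exp_zero]
    rw [hs_lim, hs, hdens]
    linear_combination 1 / (lam * kap) * y ^ (-p) * hcancel
  simp_rw [hintegrand, integral_const_mul]
  calc 1 / (lam * kap) * ∫ y in Ioi (1 : ℝ), y ^ (-p) * (1 - exp (c * y ^ (1 - p)))
      < 1 / (lam * kap) * (1 / (p - 1)) :=
        mul_lt_mul_of_pos_left (integral_Ioi_one_rpow_neg_mul_one_sub_exp_lt c hp) (by positivity)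
    _ = 1 / (lam * kap * (p - 1)) := by rw [div_mul_div_comm, one_mul]
end
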